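/- Let F be a finite field with q elements, q odd, let ε = ±1, and let ν ∈ F be a fixed nonzero non-square. Let M = [[α, β], [γ, δ]] be a 2×2 matrix over F with determinant 1 and trace 2ε, and suppose −β is a nonzero non-square in F or γ is a nonzero non-square in F. Then there exists a 2×2 matrix S over F with det S = 1 such that M = S · [[0, −ν⁻¹], [ν, 2ε]] · S⁻¹. -/
import Mathlib

lemma aux_conj {F : Type*} [Field F] (M S N : Matrix (Fin 2) (Fin 2) F)
    (h : S.det = 1) (hMS : M * S = S * N) : M = S * N * S⁻¹ := by
  have hu : IsUnit S.det := by rw [h]; exact isUnit_one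
  calc M = M * S * S⁻¹ := by
        rw [Matrix.mul_assoc, Matrix.mul_nonsing_inv S hu, Matrix.mul_one]
    _ = S * N * S⁻¹ := by rw [hMS]

lemma aux_sq {F : Type*} [Field F] [Fintype F] [DecidableEq F]
    (hchar : ringChar F ≠ 2) (a b : F) (ha : a ≠ 0) (hb : b ≠ 0)
    (ha' : ¬ ∃ y : F, a = y ^ 2) (hb' : ¬ ∃ y : F, b = y ^ 2) :
    ∃ w : F, a * b = w ^ 2 ∧ w ≠ 0 := by
  have hA : a ^ (Fintype.card F / 2) = -1 := by
    rcases FiniteField.pow_dichotomy hchar ha with h | h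
    · exfalso
      rcases (FiniteField.isSquare_iff hchar ha).mpr h with ⟨y, hy⟩
      exact ha' ⟨y, by rw [hy]; ring⟩
    · exact h
  have hB : b ^ (Fintype.card F / 2) = -1 := by
    rcases FiniteField.pow_dichotomy hchar hb with h | h
    · exfalso
      rcases (FiniteField.isSquare_iff hchar hb).mpr h with ⟨y, hy⟩
      exact hb' ⟨y, by rw [hy]; ring⟩
    · exact h
  have hab : a * b ≠ 0 := mul_ne_zero ha hb
  have : (a * b) ^ (Fintype.card F / 2) = 1 := by
    rw [mul_pow, hA, hB]; ring
  rcases (FiniteField.isSquare_iff hchar hab).mpr this with ⟨y, hy⟩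
  refine ⟨y, by rw [hy]; ring, ?_⟩
  intro h
  rw [h, mul_zero] at hy
  exact hab hy

theorem stmt_14 (F : Type*) [Field F] [Fintype F] [DecidableEq F] (q : ℕ)
    (hq : Fintype.card F = q) (hodd : Odd q)
    (ε : F) (hε : ε = 1 ∨ ε = -1)
    (ν : F) (hν : ν ≠ 0) (hνns : ¬ ∃ y : F, ν = y ^ 2)
    (α β γ δ : F) (M : Matrix (Fin 2) (Fin 2) F) (hM : M = !![α, β; γ, δ])
    (hdet : M.det = 1) (htr : α + δ = 2 * ε)
    (hns : (-β ≠ 0 ∧ ¬ ∃ y : F, -β = y ^ 2) ∨ (γ ≠ 0 ∧ ¬ ∃ y : F, γ = y ^ 2)) :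
    ∃ S : Matrix (Fin 2) (Fin 2) F, S.det = 1 ∧
      M = S * !![0, -ν⁻¹; ν, 2 * ε] * S⁻¹ := by
  have hchar : ringChar F ≠ 2 := by
    intro h
    have hC : CharP F 2 := h ▸ ringChar.charP F
    obtain ⟨n, hp, hcard⟩ := FiniteField.card F 2
    rw [hq] at hcard
    have : Even q := by
      rw [hcard]
      exact (Nat.even_pow' (by exact_mod_cast n.pos.ne')).mpr even_two
    exact (Nat.not_even_iff_odd.mpr hodd) this
  have hp : ν * ν⁻¹ = 1 := mul_inv_cancel₀ hν
  have hdet' : α * δ - β * γ = 1 := by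
    rw [hM, Matrix.det_fin_two_of] at hdet; exact hdet
  rcases hns with ⟨hb0, hbns⟩ | ⟨hg0, hgns⟩
  · -- -β is a nonzero nonsquare
    obtain ⟨w, hw, hw0⟩ := aux_sq hchar ν (-β) hν hb0 hνns hbns
    have hu : w * w⁻¹ = 1 := mul_inv_cancel₀ hw0
    refine ⟨!![-ν * β * w⁻¹, 0; ν * α * w⁻¹, w⁻¹], ?_, ?_⟩
    · rw [Matrix.det_fin_two_of]
      linear_combination (w⁻¹ * w⁻¹) * hw + (w * w⁻¹ + 1) * hu
    · apply aux_conj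
      · rw [Matrix.det_fin_two_of]
        linear_combination (w⁻¹ * w⁻¹) * hw + (w * w⁻¹ + 1) * hu
      · rw [hM]
        ext i j
        fin_cases i <;> fin_cases j <;>
          simp [Matrix.mul_apply, Fin.sum_univ_two]
        · ring
        · linear_combination (-β * w⁻¹) * hp
        · linear_combination (ν * w⁻¹) * hdet'
        · linear_combination (α * w⁻¹) * hp + w⁻¹ * htr
  · -- γ is a nonzero nonsquare
    obtain ⟨w, hw, hw0⟩ := aux_sq hchar ν γ hν hg0 hνns hgns
    have hu : w * w⁻¹ = 1 := mul_inv_cancel₀ hw0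
    refine ⟨!![ν * δ * w⁻¹, w⁻¹; -(ν * γ) * w⁻¹, 0], ?_, ?_⟩
    · rw [Matrix.det_fin_two_of]
      linear_combination (w⁻¹ * w⁻¹) * hw + (w * w⁻¹ + 1) * hu
    · apply aux_conj
      · rw [Matrix.det_fin_two_of]
        linear_combination (w⁻¹ * w⁻¹) * hw + (w * w⁻¹ + 1) * hu
      · rw [hM]
        ext i j
        fin_cases i <;> fin_cases j <;>
          simp [Matrix.mul_apply, Fin.sum_univ_two]
        · linear_combination (ν * w⁻¹) * hdet'
        · linear_combination (δ * w⁻¹) * hp + w⁻¹ * htr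
        · ring
        · linear_combination (-γ * w⁻¹) * hp
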